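/- arXiv:2210.08857 — 7 statements merged into one kernel-verified Lean document; each statement's English description precedes it below -/
import Mathlib

section
/- Let V : E → E and suppose π* ∈ Π satisfies the first-order stationarity condition ⟨V(π*), x − π*⟩ ≤ 0 for all x ∈ Π. Then for every π ∈ Π and every γ > 0, the point π⁺ = proj_Π(π + γ·V(π)) satisfies (1/2)·‖π⁺ − π*‖² ≤ (1/2)·‖π − π*‖² + γ·⟨V(π) − V(π*), π − π*⟩ + (γ²/2)·‖V(π) − V(π*)‖². (Sharpened energy inequality for exact projected-gradient steps.) -/
open scoped RealInnerProductSpace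

/-- Sharpened energy inequality for exact projected-gradient steps at a first-order
stationary point. -/
theorem energy_inequality_exact_pg_step
    {E : Type*} [NormedAddCommGroup E] [InnerProductSpace ℝ E] [FiniteDimensional ℝ E]
    (K : Set E) (hK_ne : K.Nonempty) (hK_cpt : IsCompact K) (hK_conv : Convex ℝ K)
    (proj : E → E) (hproj_mem : ∀ y, proj y ∈ K)
    (hproj_min : ∀ y : E, ∀ x ∈ K, ‖y - proj y‖ ≤ ‖y - x‖)
    (V : E → E) (πstar : E) (hπstar : πstar ∈ K)
    (hstat : ∀ x ∈ K, ⟪V πstar, x - πstar⟫ ≤ 0) :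
    ∀ π ∈ K, ∀ γ : ℝ, 0 < γ →
      (1 : ℝ) / 2 * ‖proj (π + γ • V π) - πstar‖ ^ 2 ≤
        1 / 2 * ‖π - πstar‖ ^ 2 + γ * ⟪V π - V πstar, π - πstar⟫
          + γ ^ 2 / 2 * ‖V π - V πstar‖ ^ 2 := by
  intro π hπ γ hγ
  set y := π + γ • V π with hy
  set p := proj y with hp
  have hpK : p ∈ K := hproj_mem y
  haveI : Nonempty K := ⟨⟨p, hpK⟩⟩
  -- projection characterization
  have hinf : ‖y - p‖ = ⨅ w : K, ‖y - w‖ := by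
    apply le_antisymm
    · exact le_ciInf fun w => hproj_min y w w.2
    · refine ciInf_le ⟨0, ?_⟩ (⟨p, hpK⟩ : K)
      rintro r ⟨w, rfl⟩; exact norm_nonneg _
  have hchar : ∀ x ∈ K, ⟪y - p, x - p⟫ ≤ 0 :=
    (norm_eq_iInf_iff_real_inner_le_zero hK_conv hpK).mp hinf
  -- key: ‖p - π*‖ ≤ ‖(π - π*) + γ•(Vπ - Vπ*)‖
  set a := (π - πstar) + γ • (V π - V πstar) with ha
  have hkey : ‖p - πstar‖ ≤ ‖a‖ := by
    have h1 : ⟪y - p, πstar - p⟫ ≤ 0 := hchar πstar hπstar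
    have h2 : ⟪V πstar, p - πstar⟫ ≤ 0 := hstat p hpK
    have hya : y - πstar = a + γ • V πstar := by
      rw [ha, hy, smul_sub]; abel
    have hsq : ‖p - πstar‖ ^ 2 ≤ ⟪a, p - πstar⟫ := by
      have e1 : ⟪p - πstar, p - πstar⟫ ≤ ⟪y - πstar, p - πstar⟫ := by
        have ed : ⟪y - πstar, p - πstar⟫ - ⟪p - πstar, p - πstar⟫ = ⟪y - p, p - πstar⟫ := by
          rw [← inner_sub_left]; congr 1; abel
        have en : ⟪y - p, p - πstar⟫ = -⟪y - p, πstar - p⟫ := by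
          rw [show πstar - p = -(p - πstar) by abel, inner_neg_right]; ring
        linarith
      have e2 : ⟪y - πstar, p - πstar⟫ = ⟪a, p - πstar⟫ + γ * ⟪V πstar, p - πstar⟫ := by
        rw [hya, inner_add_left, real_inner_smul_left]
      have := real_inner_self_eq_norm_sq (p - πstar)
      nlinarith
    have hcs : ⟪a, p - πstar⟫ ≤ ‖a‖ * ‖p - πstar‖ := real_inner_le_norm a (p - πstar)
    nlinarith [norm_nonneg (p - πstar), norm_nonneg a]
  have hexp : ‖a‖ ^ 2 = ‖π - πstar‖ ^ 2 + 2 * γ * ⟪V π - V πstar, π - πstar⟫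
      + γ ^ 2 * ‖V π - V πstar‖ ^ 2 := by
    rw [ha, norm_add_sq_real, norm_smul, real_inner_smul_right, Real.norm_eq_abs,
      abs_of_pos hγ, mul_pow, real_inner_comm]
    ring
  have : ‖p - πstar‖ ^ 2 ≤ ‖a‖ ^ 2 := by
    nlinarith [norm_nonneg (p - πstar)]
  rw [hexp] at this
  linarith
end

section
/- Let V : E → E be G-Lipschitz (G > 0), and let π* ∈ Π satisfy: (i) ⟨V(π*), x − π*⟩ ≤ 0 for all x ∈ Π; and (ii) there exist μ ∈ (0, G] and r > 0 such that ⟨V(π) − V(π*), π − π*⟩ ≤ −μ·‖π − π*‖² for all π ∈ Π with ‖π − π*‖ ≤ r. Fix a constant step size 0 < γ < 2μ/G² and define the projected-gradient iterates π_{n+1} = proj_Π(π_n + γ·V(π_n)) from any π₁ ∈ Π with ‖π₁ − π*‖ ≤ r. Then, with ρ = 1 − 2μγ + γ²G², one has 0 ≤ ρ < 1 and ‖π_n − π*‖² ≤ ρ^{n−1}·‖π₁ − π*‖² for all n ≥ 1; in particular π_n converges to π* at a geometric rate. -/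
open Filter
open scoped RealInnerProductSpace Topology

set_option maxHeartbeats 800000 in
/-- Geometric convergence of projected gradient steps near a second-order stationary
point, with perfect gradient information. -/
theorem geometric_convergence_pg
    {E : Type*} [NormedAddCommGroup E] [InnerProductSpace ℝ E] [FiniteDimensional ℝ E]
    (K : Set E) (hK_ne : K.Nonempty) (hK_cpt : IsCompact K) (hK_conv : Convex ℝ K)
    (proj : E → E) (hproj_mem : ∀ y, proj y ∈ K)
    (hproj_min : ∀ y : E, ∀ x ∈ K, ‖y - proj y‖ ≤ ‖y - x‖)
    (V : E → E) (G : ℝ) (hG : 0 < G)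
    (hLip : ∀ x y : E, ‖V x - V y‖ ≤ G * ‖x - y‖)
    (πstar : E) (hπstar : πstar ∈ K)
    (hstat : ∀ x ∈ K, ⟪V πstar, x - πstar⟫ ≤ 0)
    (μ r : ℝ) (hμ0 : 0 < μ) (hμG : μ ≤ G) (hr : 0 < r)
    (hdrift : ∀ x ∈ K, ‖x - πstar‖ ≤ r →
      ⟪V x - V πstar, x - πstar⟫ ≤ -μ * ‖x - πstar‖ ^ 2)
    (γ : ℝ) (hγ0 : 0 < γ) (hγlt : γ < 2 * μ / G ^ 2)
    (π : ℕ → E) (h1K : π 1 ∈ K) (h1r : ‖π 1 - πstar‖ ≤ r)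
    (hrec : ∀ n : ℕ, 1 ≤ n → π (n + 1) = proj (π n + γ • V (π n))) :
    0 ≤ 1 - 2 * μ * γ + γ ^ 2 * G ^ 2 ∧ 1 - 2 * μ * γ + γ ^ 2 * G ^ 2 < 1 ∧
      (∀ n : ℕ, 1 ≤ n →
        ‖π n - πstar‖ ^ 2 ≤ (1 - 2 * μ * γ + γ ^ 2 * G ^ 2) ^ (n - 1) * ‖π 1 - πstar‖ ^ 2) ∧
      Tendsto π atTop (𝓝 πstar) := by
  have hρ0 : 0 ≤ 1 - 2 * μ * γ + γ ^ 2 * G ^ 2 := by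
    nlinarith [sq_nonneg (1 - γ * μ),
      mul_nonneg (mul_nonneg hγ0.le hγ0.le)
        (mul_nonneg (sub_nonneg.mpr hμG) (by linarith : (0:ℝ) ≤ G + μ))]
  have hγG : γ * G ^ 2 < 2 * μ := by
    have h := (lt_div_iff₀ (by positivity : (0:ℝ) < G ^ 2)).mp hγlt
    linarith
  have hρ1 : 1 - 2 * μ * γ + γ ^ 2 * G ^ 2 < 1 := by nlinarith
  set ρ : ℝ := 1 - 2 * μ * γ + γ ^ 2 * G ^ 2 with hρdef
  haveI : Nonempty K := hK_ne.to_subtype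
  -- variational inequality for the projection
  have hvar : ∀ y : E, ∀ x ∈ K, ⟪y - proj y, x - proj y⟫ ≤ 0 := by
    intro y
    have hiInf : ‖y - proj y‖ = ⨅ w : K, ‖y - w‖ := by
      refine le_antisymm (le_ciInf fun w => hproj_min y w w.2) ?_
      have hbdd : BddBelow (Set.range fun w : K => ‖y - (w : E)‖) := by
        refine ⟨0, ?_⟩
        rintro a ⟨w, rfl⟩
        exact norm_nonneg _
      exact ciInf_le hbdd ⟨proj y, hproj_mem y⟩
    exact (norm_eq_iInf_iff_real_inner_le_zero hK_conv (hproj_mem y)).mp hiInf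
  -- πstar is fixed by the projected-gradient map
  have hfix : proj (πstar + γ • V πstar) = πstar := by
    set y := πstar + γ • V πstar with hy
    set q := proj y with hq
    have h1 : ⟪y - q, πstar - q⟫ ≤ 0 := hvar y πstar hπstar
    have h2 : ⟪y - πstar, q - πstar⟫ ≤ 0 := by
      have hs := hstat q (hproj_mem y)
      have he : ⟪y - πstar, q - πstar⟫ = γ * ⟪V πstar, q - πstar⟫ := by
        rw [hy]; simp [real_inner_smul_left]
      rw [he]
      exact mul_nonpos_of_nonneg_of_nonpos hγ0.le hs
    have hid : ⟪y - q, πstar - q⟫ + ⟪y - πstar, q - πstar⟫ = ‖q - πstar‖ ^ 2 := by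
      rw [← real_inner_self_eq_norm_sq]
      simp only [inner_sub_left, inner_sub_right]
      ring
    have hsum : ‖q - πstar‖ ^ 2 ≤ 0 := by linarith
    have hz : q - πstar = 0 := by
      have : ‖q - πstar‖ = 0 := by nlinarith [norm_nonneg (q - πstar)]
      exact norm_eq_zero.mp this
    exact sub_eq_zero.mp hz
  -- the contraction estimate
  have hcontr : ∀ x ∈ K, ‖x - πstar‖ ≤ r →
      ‖proj (x + γ • V x) - πstar‖ ^ 2 ≤ ρ * ‖x - πstar‖ ^ 2 := by
    intro x hxK hxr
    set y := x + γ • V x with hy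
    set z := πstar + γ • V πstar with hz
    set q := proj y with hq
    have h1 : ⟪y - q, πstar - q⟫ ≤ 0 := hvar y πstar hπstar
    have h2 : ⟪z - πstar, q - πstar⟫ ≤ 0 := by
      have := hvar z q (hproj_mem y)
      rwa [hfix] at this
    have hid : ⟪y - z, q - πstar⟫ - ‖q - πstar‖ ^ 2
        = -(⟪y - q, πstar - q⟫ + ⟪z - πstar, q - πstar⟫) := by
      rw [← real_inner_self_eq_norm_sq]
      simp only [inner_sub_left, inner_sub_right]
      ring
    have hne : ‖q - πstar‖ ^ 2 ≤ ⟪y - z, q - πstar⟫ := by linarith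
    have hcs : ⟪y - z, q - πstar⟫ ≤ ‖y - z‖ * ‖q - πstar‖ :=
      real_inner_le_norm _ _
    have hqle : ‖q - πstar‖ ≤ ‖y - z‖ := by
      rcases eq_or_lt_of_le (norm_nonneg (q - πstar)) with h0 | h0
      · rw [← h0]; exact norm_nonneg _
      · nlinarith
    -- expand ‖y - z‖²
    have hyz : y - z = (x - πstar) + γ • (V x - V πstar) := by
      rw [hy, hz, smul_sub]; abel
    have hexp : ‖y - z‖ ^ 2 = ‖x - πstar‖ ^ 2
        + 2 * (γ * ⟪V x - V πstar, x - πstar⟫) + γ ^ 2 * ‖V x - V πstar‖ ^ 2 := by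
      rw [hyz, norm_add_sq_real, real_inner_smul_right, norm_smul,
        Real.norm_eq_abs, abs_of_pos hγ0, mul_pow,
        real_inner_comm (x - πstar) (V x - V πstar)]
      try ring
    have hd := hdrift x hxK hxr
    have hL := hLip x πstar
    have hVsq : ‖V x - V πstar‖ ^ 2 ≤ G ^ 2 * ‖x - πstar‖ ^ 2 := by
      nlinarith [norm_nonneg (V x - V πstar), norm_nonneg (x - πstar)]
    have hyz2 : ‖y - z‖ ^ 2 ≤ ρ * ‖x - πstar‖ ^ 2 := by
      rw [hexp, hρdef]; nlinarith [sq_nonneg γ]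
    have hq2 : ‖q - πstar‖ ^ 2 ≤ ‖y - z‖ ^ 2 := by
      nlinarith [norm_nonneg (q - πstar), norm_nonneg (y - z)]
    exact hq2.trans hyz2
  -- main induction
  have key : ∀ n : ℕ, 1 ≤ n → π n ∈ K ∧ ‖π n - πstar‖ ≤ r ∧
      ‖π n - πstar‖ ^ 2 ≤ ρ ^ (n - 1) * ‖π 1 - πstar‖ ^ 2 := by
    intro n hn
    induction n, hn using Nat.le_induction with
    | base => exact ⟨h1K, h1r, by simp⟩
    | succ n hn ih =>
      obtain ⟨hK', hr', hsq'⟩ := ih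
      have hstep := hcontr (π n) hK' hr'
      rw [← hrec n hn] at hstep
      refine ⟨by rw [hrec n hn]; exact hproj_mem _, ?_, ?_⟩
      · have hnsq : ‖π n - πstar‖ ^ 2 ≤ r ^ 2 := by
          nlinarith [norm_nonneg (π n - πstar)]
        have h1 : ‖π (n+1) - πstar‖ ^ 2 ≤ r ^ 2 := by
          nlinarith [mul_le_mul_of_nonneg_left hnsq hρ0, sq_nonneg r]
        nlinarith [norm_nonneg (π (n+1) - πstar)]
      · have hmul : ρ * ‖π n - πstar‖ ^ 2 ≤ ρ * (ρ ^ (n - 1) * ‖π 1 - πstar‖ ^ 2) :=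
          mul_le_mul_of_nonneg_left hsq' hρ0
        have hpow : ρ * ρ ^ (n - 1) = ρ ^ (n + 1 - 1) := by
          rw [← pow_succ']
          congr 1
          omega
        calc ‖π (n+1) - πstar‖ ^ 2 ≤ ρ * ‖π n - πstar‖ ^ 2 := hstep
          _ ≤ ρ * (ρ ^ (n - 1) * ‖π 1 - πstar‖ ^ 2) := hmul
          _ = ρ ^ (n + 1 - 1) * ‖π 1 - πstar‖ ^ 2 := by rw [← mul_assoc, hpow]
  refine ⟨hρ0, hρ1, fun n hn => (key n hn).2.2, ?_⟩
  -- convergence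
  have hten : Tendsto (fun n : ℕ => ρ ^ (n - 1) * ‖π 1 - πstar‖ ^ 2) atTop (𝓝 0) := by
    have h1 : Tendsto (fun n : ℕ => ρ ^ n) atTop (𝓝 0) :=
      tendsto_pow_atTop_nhds_zero_of_lt_one hρ0 hρ1
    have h2 : Tendsto (fun n : ℕ => n - 1) atTop atTop :=
      tendsto_sub_atTop_nat 1
    have := (h1.comp h2).mul_const (‖π 1 - πstar‖ ^ 2)
    simpa using this
  have hsq0 : Tendsto (fun n : ℕ => ‖π n - πstar‖ ^ 2) atTop (𝓝 0) := by
    refine squeeze_zero' ?_ ?_ hten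
    · exact Eventually.of_forall fun n => by positivity
    · filter_upwards [eventually_ge_atTop 1] with n hn
      exact (key n hn).2.2
  have hnorm0 : Tendsto (fun n : ℕ => ‖π n - πstar‖) atTop (𝓝 0) := by
    have h : Tendsto (fun n : ℕ => Real.sqrt (‖π n - πstar‖ ^ 2)) atTop (𝓝 (Real.sqrt 0)) :=
      (Real.continuous_sqrt.tendsto 0).comp hsq0
    have heq : (fun n : ℕ => Real.sqrt (‖π n - πstar‖ ^ 2)) = fun n => ‖π n - πstar‖ := by
      funext n; exact Real.sqrt_sq (norm_nonneg _)
    rw [Real.sqrt_zero] at h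
    rwa [heq] at h
  exact tendsto_iff_norm_sub_tendsto_zero.mpr hnorm0
end

section
/- Let Π ⊆ E be nonempty compact convex, let V : E → E be continuously differentiable on an open set containing Π, and let π* ∈ Π satisfy: (i) first-order stationarity, ⟨V(π*), π − π*⟩ ≤ 0 for all π ∈ Π; and (ii) the second-order sufficiency condition ⟨z, DV(π*)·z⟩ < 0 for every nonzero z in the tangent cone T_Π(π*), where DV(π*) is the Fréchet derivative of V at π*. Then there exist μ > 0 and an open neighborhood 𝒰 of π* in E such that ⟨V(π), π − π*⟩ ≤ −μ·‖π − π*‖² for all π ∈ Π ∩ 𝒰. -/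
open scoped RealInnerProductSpace Topology

/-!
The quadratic form `z ↦ ⟪z, DV(π*) z⟫` is negative on the unit vectors of the closed tangent
cone, which form a compact set, so it is bounded above there by some `-2μ < 0`; by homogeneity
`⟪z, DV(π*) z⟫ ≤ -2μ ‖z‖²` on the whole cone, in particular for `z = π - π*` with `π ∈ Π`.
Writing `V π = V π* + DV(π*) (π - π*) + o(‖π - π*‖)`, the first term contributes `≤ 0` by
stationarity, the second `≤ -2μ ‖π - π*‖²`, and near `π*` the remainder at most `μ ‖π - π*‖²`.
-/

section

variable {E : Type*} [NormedAddCommGroup E] [InnerProductSpace ℝ E]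

lemma inner_smul_apply_smul (A : E →L[ℝ] E) (c : ℝ) (z : E) :
    ⟪c • z, A (c • z)⟫ = c ^ 2 * ⟪z, A z⟫ := by
  simp only [map_smul, real_inner_smul_left, real_inner_smul_right]
  ring

lemma exists_inner_apply_le_neg_mul_sq_of_isClosed_cone [FiniteDimensional ℝ E]
    (A : E →L[ℝ] E) {T : Set E} (hT : IsClosed T)
    (hT_smul : ∀ c : ℝ, 0 ≤ c → ∀ z ∈ T, c • z ∈ T)
    (hA : ∀ z ∈ T, z ≠ 0 → ⟪z, A z⟫ < 0) :
    ∃ m : ℝ, 0 < m ∧ ∀ z ∈ T, ⟪z, A z⟫ ≤ -m * ‖z‖ ^ 2 := by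
  have hS : IsCompact (T ∩ Metric.sphere 0 1) := (isCompact_sphere 0 1).inter_left hT
  have hcont : Continuous fun z : E => -⟪z, A z⟫ := (continuous_id.inner A.continuous).neg
  obtain ⟨m, hm, hmS⟩ := hS.exists_forall_le' hcont.continuousOn (a := 0) fun z hz =>
    neg_pos.mpr <| hA z hz.1 <| ne_zero_of_mem_unit_sphere ⟨z, hz.2⟩
  refine ⟨m, hm, fun z hz => ?_⟩
  rcases eq_or_ne z 0 with rfl | hz0
  · simp
  have hnorm : 0 < ‖z‖ := norm_pos_iff.mpr hz0
  have hunit : ‖z‖⁻¹ • z ∈ T ∩ Metric.sphere 0 1 := by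
    refine ⟨hT_smul _ (inv_nonneg.mpr hnorm.le) z hz, ?_⟩
    rw [mem_sphere_zero_iff_norm, norm_smul, norm_inv, norm_norm, inv_mul_cancel₀ hnorm.ne']
  have hle := hmS _ hunit
  rw [inner_smul_apply_smul, inv_pow] at hle
  have hsq : 0 < ‖z‖ ^ 2 := by positivity
  rw [le_neg, inv_mul_le_iff₀ hsq] at hle
  linarith

lemma HasFDerivAt.eventually_inner_sub_le {V : E → E} {A : E →L[ℝ] E} {x₀ : E}
    (hV : HasFDerivAt V A x₀) {ε : ℝ} (hε : 0 < ε) :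
    ∀ᶠ x in 𝓝 x₀, ⟪V x, x - x₀⟫ ≤
      ⟪V x₀, x - x₀⟫ + ⟪x - x₀, A (x - x₀)⟫ + ε * ‖x - x₀‖ ^ 2 := by
  filter_upwards [hV.isLittleO.def hε] with x hx
  have hsplit : ⟪V x, x - x₀⟫ = ⟪V x₀, x - x₀⟫ + ⟪x - x₀, A (x - x₀)⟫ +
      ⟪V x - V x₀ - A (x - x₀), x - x₀⟫ := by
    rw [real_inner_comm (A (x - x₀)) (x - x₀), inner_sub_left, inner_sub_left]
    ring
  have hrem : ⟪V x - V x₀ - A (x - x₀), x - x₀⟫ ≤ ε * ‖x - x₀‖ ^ 2 :=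
    calc ⟪V x - V x₀ - A (x - x₀), x - x₀⟫
        ≤ ‖V x - V x₀ - A (x - x₀)‖ * ‖x - x₀‖ := real_inner_le_norm _ _
      _ ≤ ε * ‖x - x₀‖ * ‖x - x₀‖ := by gcongr
      _ = ε * ‖x - x₀‖ ^ 2 := by ring
  linarith

lemma closure_cone_smul_mem {K : Set E} {x₀ : E} {c : ℝ} (hc : 0 ≤ c) {z : E}
    (hz : z ∈ closure {z : E | ∃ l : ℝ, 0 ≤ l ∧ ∃ q ∈ K, z = l • (q - x₀)}) :
    c • z ∈ closure {z : E | ∃ l : ℝ, 0 ≤ l ∧ ∃ q ∈ K, z = l • (q - x₀)} := by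
  refine map_mem_closure (continuous_const_smul c) hz ?_
  rintro w ⟨l, hl, q, hq, rfl⟩
  exact ⟨c * l, mul_nonneg hc hl, q, hq, (mul_smul c l _).symm⟩

end

theorem sos_quadratic_drift_general
    {E : Type*} [NormedAddCommGroup E] [InnerProductSpace ℝ E] [FiniteDimensional ℝ E]
    (K : Set E)
    (V : E → E) (πstar : E) (hπstar : πstar ∈ K)
    (O : Set E) (hO : IsOpen O) (hKO : K ⊆ O) (hV : ContDiffOn ℝ 1 V O)
    (hstat : ∀ x ∈ K, ⟪V πstar, x - πstar⟫ ≤ 0)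
    (hsos : ∀ z ∈ closure {z : E | ∃ l : ℝ, 0 ≤ l ∧ ∃ q ∈ K, z = l • (q - πstar)},
      z ≠ 0 → ⟪z, fderiv ℝ V πstar z⟫ < 0) :
    ∃ μ : ℝ, 0 < μ ∧ ∃ 𝒰 : Set E, IsOpen 𝒰 ∧ πstar ∈ 𝒰 ∧
      ∀ x ∈ K ∩ 𝒰, ⟪V x, x - πstar⟫ ≤ -μ * ‖x - πstar‖ ^ 2 := by
  have hderiv : HasFDerivAt V (fderiv ℝ V πstar) πstar :=
    ((hV.contDiffAt (hO.mem_nhds (hKO hπstar))).differentiableAt one_ne_zero).hasFDerivAt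
  obtain ⟨m, hm, hquad⟩ := exists_inner_apply_le_neg_mul_sq_of_isClosed_cone _
    isClosed_closure (fun c hc z hz => closure_cone_smul_mem hc hz) hsos
  obtain ⟨𝒰, h𝒰, h𝒰_open, hπ𝒰⟩ :=
    eventually_nhds_iff.mp (hderiv.eventually_inner_sub_le (half_pos hm))
  refine ⟨m / 2, half_pos hm, 𝒰, h𝒰_open, hπ𝒰, fun x ⟨hxK, hx𝒰⟩ => ?_⟩
  have hcone : x - πstar ∈ closure {z : E | ∃ l : ℝ, 0 ≤ l ∧ ∃ q ∈ K, z = l • (q - πstar)} :=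
    subset_closure ⟨1, zero_le_one, x, hxK, (one_smul ℝ _).symm⟩
  linarith [h𝒰 x hx𝒰, hstat x hxK, hquad _ hcone]

/-- Near a second-order stationary point, the drift is quadratically negative:
if `πstar` is first-order stationary and the Jacobian of `V` at `πstar` is negative
definite along the tangent cone of `K` at `πstar`, then there exist `μ > 0` and an open
neighborhood `𝒰` of `πstar` on which `⟪V π, π - πstar⟫ ≤ -μ ‖π - πstar‖²`. -/
theorem sos_quadratic_drift
    {E : Type*} [NormedAddCommGroup E] [InnerProductSpace ℝ E] [FiniteDimensional ℝ E]
    (K : Set E) (hK_ne : K.Nonempty) (hK_cpt : IsCompact K) (hK_conv : Convex ℝ K)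
    (V : E → E) (πstar : E) (hπstar : πstar ∈ K)
    (O : Set E) (hO : IsOpen O) (hKO : K ⊆ O) (hV : ContDiffOn ℝ 1 V O)
    (hstat : ∀ x ∈ K, ⟪V πstar, x - πstar⟫ ≤ 0)
    (hsos : ∀ z ∈ closure {z : E | ∃ l : ℝ, 0 ≤ l ∧ ∃ q ∈ K, z = l • (q - πstar)},
      z ≠ 0 → ⟪z, fderiv ℝ V πstar z⟫ < 0) :
    ∃ μ : ℝ, 0 < μ ∧ ∃ 𝒰 : Set E, IsOpen 𝒰 ∧ πstar ∈ 𝒰 ∧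
      ∀ x ∈ K ∩ 𝒰, ⟪V x, x - πstar⟫ ≤ -μ * ‖x - πstar‖ ^ 2 :=
  sos_quadratic_drift_general K V πstar hπstar O hO hKO hV hstat hsos
end

section
/- Let Π ⊆ E be nonempty compact convex, let V : E → E be continuous, and let π* ∈ Π satisfy ⟨V(π*), z⟩ < 0 for every nonzero z in the tangent cone T_Π(π*) (in particular ⟨V(π*), π − π*⟩ < 0 for all π ∈ Π with π ≠ π*, i.e. π* is a strict equilibrium of V). Then there exist μ > 0 and an open neighborhood 𝒰 of π* in E such that ⟨V(π), π − π*⟩ ≤ −μ·‖π − π*‖ for all π ∈ Π ∩ 𝒰. -/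
open scoped RealInnerProductSpace

/-- Near a strict equilibrium, the drift is linearly negative: if
`⟪V πstar, z⟫ < 0` for every nonzero `z` in the tangent cone of `K` at `πstar`,
then there exist `μ > 0` and an open neighborhood `𝒰` of `πstar` on which
`⟪V π, π - πstar⟫ ≤ -μ ‖π - πstar‖`. -/
theorem strict_linear_drift
    {E : Type*} [NormedAddCommGroup E] [InnerProductSpace ℝ E] [FiniteDimensional ℝ E]
    (K : Set E) (hK_ne : K.Nonempty) (hK_cpt : IsCompact K) (hK_conv : Convex ℝ K)
    (V : E → E) (hV : Continuous V) (πstar : E) (hπstar : πstar ∈ K)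
    (hstrict : ∀ z ∈ closure {z : E | ∃ l : ℝ, 0 ≤ l ∧ ∃ q ∈ K, z = l • (q - πstar)},
      z ≠ 0 → ⟪V πstar, z⟫ < 0) :
    ∃ μ : ℝ, 0 < μ ∧ ∃ 𝒰 : Set E, IsOpen 𝒰 ∧ πstar ∈ 𝒰 ∧
      ∀ x ∈ K ∩ 𝒰, ⟪V x, x - πstar⟫ ≤ -μ * ‖x - πstar‖ := by
  set C := closure {z : E | ∃ l : ℝ, 0 ≤ l ∧ ∃ q ∈ K, z = l • (q - πstar)} with hC
  set S := C ∩ Metric.sphere (0 : E) 1 with hS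
  have hScpt : IsCompact S := (isCompact_sphere (0 : E) 1).inter_left isClosed_closure
  -- find μ with ∀ z ∈ S, ⟪V πstar, z⟫ ≤ -2*μ
  obtain ⟨μ, hμ, hμS⟩ : ∃ μ : ℝ, 0 < μ ∧ ∀ z ∈ S, ⟪V πstar, z⟫ ≤ -(2*μ) := by
    rcases S.eq_empty_or_nonempty with h | hne
    · exact ⟨1, one_pos, fun z hz => absurd hz (by simp [h])⟩
    · obtain ⟨z₀, hz₀, hmax⟩ := hScpt.exists_isMaxOn hne
        (show ContinuousOn (fun z : E => ⟪V πstar, z⟫) S from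
          (continuous_const.inner continuous_id).continuousOn)
      have hz₀ne : z₀ ≠ 0 := by
        intro h
        have := hz₀.2
        simp [h] at this
      have hneg : ⟪V πstar, z₀⟫ < 0 := hstrict z₀ hz₀.1 hz₀ne
      refine ⟨-⟪V πstar, z₀⟫ / 2, by linarith, fun z hz => ?_⟩
      have := hmax hz
      simp only [Set.mem_setOf_eq] at this
      have : ⟪V πstar, z⟫ ≤ ⟪V πstar, z₀⟫ := this
      linarith
  refine ⟨μ, hμ, V ⁻¹' Metric.ball (V πstar) μ, (Metric.isOpen_ball).preimage hV,
    by simp [hμ], fun x hx => ?_⟩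
  rcases eq_or_ne x πstar with rfl | hne
  · simp
  · set n := ‖x - πstar‖ with hn
    have hnpos : 0 < n := by
      simpa [hn, sub_eq_zero] using hne
    have hzS : (n⁻¹ • (x - πstar)) ∈ S := by
      constructor
      · exact subset_closure ⟨n⁻¹, by positivity, x, hx.1, rfl⟩
      · simp only [Metric.mem_sphere, dist_zero_right, norm_smul, norm_inv, Real.norm_eq_abs]
        rw [abs_of_pos hnpos, ← hn, inv_mul_cancel₀ hnpos.ne']
    have h1 : ⟪V πstar, x - πstar⟫ ≤ -(2*μ) * n := by
      have := hμS _ hzS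
      rw [real_inner_smul_right] at this
      calc ⟪V πstar, x - πstar⟫ = n * (n⁻¹ * ⟪V πstar, x - πstar⟫) := by
            field_simp
        _ ≤ n * (-(2*μ)) := by nlinarith
        _ = -(2*μ) * n := by ring
    have h2 : ⟪V x - V πstar, x - πstar⟫ ≤ μ * n := by
      calc ⟪V x - V πstar, x - πstar⟫ ≤ ‖V x - V πstar‖ * ‖x - πstar‖ :=
            real_inner_le_norm _ _
        _ ≤ μ * n := by
            have hd : ‖V x - V πstar‖ ≤ μ := le_of_lt (by
              have := hx.2
              simpa [Metric.mem_ball, dist_eq_norm] using this)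
            exact mul_le_mul_of_nonneg_right hd hnpos.le |>.trans_eq rfl
    have : ⟪V x, x - πstar⟫ = ⟪V πstar, x - πstar⟫ + ⟪V x - V πstar, x - πstar⟫ := by
      rw [← inner_add_left, add_sub_cancel]
    rw [this]
    nlinarith
end

section
/- Let A be a nonempty finite set, y : A → ℝ, and x ∈ Δ(A). Then x is the Euclidean projection of y onto Δ(A), i.e. Σ_{a∈A} (y_a − x_a)² ≤ Σ_{a∈A} (y_a − z_a)² for all z ∈ Δ(A), if and only if there exist μ ∈ ℝ and ν : A → ℝ such that for every a ∈ A: y_a = x_a + μ − ν_a, ν_a ≥ 0, and x_a·ν_a = 0. (KKT characterization of the Euclidean projection onto the simplex.) -/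
/-- KKT characterization of the Euclidean projection onto the simplex. -/
theorem kkt_projection_simplex
    {A : Type*} [Fintype A] [Nonempty A] (y x : A → ℝ)
    (hx_nonneg : ∀ a, 0 ≤ x a) (hx_sum : ∑ a, x a = 1) :
    (∀ z : A → ℝ, (∀ a, 0 ≤ z a) → ∑ a, z a = 1 →
        ∑ a, (y a - x a) ^ 2 ≤ ∑ a, (y a - z a) ^ 2) ↔
      ∃ μ : ℝ, ∃ ν : A → ℝ, ∀ a, y a = x a + μ - ν a ∧ 0 ≤ ν a ∧ x a * ν a = 0 := by
  classical
  constructor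
  · intro hopt
    -- key variational inequality: if x b > 0 then g a ≤ g b where g c = y c - x c
    have key : ∀ a b : A, 0 < x b → y a - x a ≤ y b - x b := by
      intro a b hb
      by_cases hab : a = b
      · subst hab; exact le_rfl
      · -- for every small t, g a - g b ≤ t
        have step : ∀ t : ℝ, 0 < t → t ≤ x b →
            (y a - x a) - (y b - x b) ≤ t := by
          intro t ht htb
          set z : A → ℝ := fun c =>
            x c + t * ((if c = a then (1:ℝ) else 0) - (if c = b then (1:ℝ) else 0)) with hz
          have hznn : ∀ c, 0 ≤ z c := by
            intro c
            simp only [hz]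
            split_ifs with h1 h2 h2
            · exact absurd (h1 ▸ h2 : a = b) hab
            · nlinarith [hx_nonneg c]
            · simp only [h2]; nlinarith
            · simpa using hx_nonneg c
          have hzsum : ∑ c, z c = 1 := by
            simp only [hz]
            rw [Finset.sum_add_distrib, ← Finset.mul_sum, Finset.sum_sub_distrib]
            simp [Finset.sum_ite_eq', hx_sum]
          have h := hopt z hznn hzsum
          have hexp : ∑ c, (y c - z c) ^ 2 =
              ∑ c, ((y c - x c) ^ 2
                - 2 * t * ((y c - x c) * (if c = a then (1:ℝ) else 0))
                + 2 * t * ((y c - x c) * (if c = b then (1:ℝ) else 0))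
                + t ^ 2 * (if c = a then (1:ℝ) else 0)
                + t ^ 2 * (if c = b then (1:ℝ) else 0)) := by
            refine Finset.sum_congr rfl fun c _ => ?_
            simp only [hz]
            split_ifs with h1 h2 h2
            · exact absurd (h1 ▸ h2 : a = b) hab
            · ring
            · ring
            · ring
          rw [hexp] at h
          simp only [Finset.sum_add_distrib, Finset.sum_sub_distrib, ← Finset.mul_sum,
            mul_ite, mul_one, mul_zero, Finset.sum_ite_eq', Finset.mem_univ, if_true] at h
          nlinarith
        by_contra hc
        push_neg at hc
        set δ := (y a - x a) - (y b - x b) with hδ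
        have hδpos : 0 < δ := by simp only [hδ]; linarith
        have := step (min (x b) (δ / 2)) (lt_min hb (by linarith)) (min_le_left _ _)
        have : min (x b) (δ / 2) ≤ δ / 2 := min_le_right _ _
        linarith
    -- pick a point in the support
    have hsum1 : ∑ a, x a ≠ 0 := by rw [hx_sum]; norm_num
    obtain ⟨b₀, _, hb₀⟩ := Finset.exists_ne_zero_of_sum_ne_zero hsum1
    have hb₀pos : 0 < x b₀ := lt_of_le_of_ne (hx_nonneg b₀) (Ne.symm hb₀)
    refine ⟨y b₀ - x b₀, fun a => (y b₀ - x b₀) - (y a - x a), fun a => ?_⟩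
    refine ⟨by dsimp only; ring, by dsimp only; have := key a b₀ hb₀pos; linarith, ?_⟩
    dsimp only
    rcases eq_or_lt_of_le (hx_nonneg a) with h | h
    · rw [← h]; ring
    · have h1 := key a b₀ hb₀pos
      have h2 := key b₀ a h
      have : (y b₀ - x b₀) - (y a - x a) = 0 := by linarith
      rw [this, mul_zero]
  · rintro ⟨μ, ν, hμν⟩ z hznn hzsum
    have hexp : ∑ a, (y a - z a) ^ 2 =
        ∑ a, ((y a - x a) ^ 2 + (x a - z a) ^ 2 + 2 * μ * (x a - z a)
          - 2 * (x a * ν a) + 2 * (ν a * z a)) := by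
      refine Finset.sum_congr rfl fun a _ => ?_
      have h1 := (hμν a).1
      rw [h1]; ring
    rw [hexp]
    have hcs : ∀ a, x a * ν a = 0 := fun a => (hμν a).2.2
    have hnz : 0 ≤ ∑ a, ν a * z a :=
      Finset.sum_nonneg fun a _ => mul_nonneg (hμν a).2.1 (hznn a)
    have hsq : 0 ≤ ∑ a, (x a - z a) ^ 2 :=
      Finset.sum_nonneg fun a _ => sq_nonneg _
    simp only [Finset.sum_add_distrib, Finset.sum_sub_distrib, ← Finset.mul_sum,
      Finset.sum_sub_distrib, hcs, Finset.sum_const_zero, mul_zero, sub_zero]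
    rw [hx_sum, hzsum]
    nlinarith
end

section
/- Let A be a finite set with at least two elements, let a* ∈ A, and let ε ∈ (0, 1). Suppose y : A → ℝ satisfies y_{a*} − y_a > 1 − ε/|A| for every a ∈ A with a ≠ a*. Then the Euclidean projection x of y onto the simplex Δ(A) (the point x ∈ Δ(A) with Σ_a (y_a − x_a)² ≤ Σ_a (y_a − z_a)² for all z ∈ Δ(A)) satisfies x_a < ε/|A| for every a ≠ a*; in particular x_{a*} > 1 − ε. -/
/-- If one coordinate of `y` dominates every other coordinate by more than
`1 - ε/|A|`, then the Euclidean projection of `y` onto the simplex puts mass less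
than `ε/|A|` on every non-dominant coordinate, hence more than `1 - ε` on the
dominant one. -/
theorem projection_near_vertex
    {A : Type*} [Fintype A] (hA : 1 < Fintype.card A)
    (aStar : A) (ε : ℝ) (hε0 : 0 < ε) (hε1 : ε < 1)
    (y : A → ℝ) (hy : ∀ a : A, a ≠ aStar → 1 - ε / Fintype.card A < y aStar - y a)
    (x : A → ℝ) (hx_nonneg : ∀ a, 0 ≤ x a) (hx_sum : ∑ a, x a = 1)
    (hx_proj : ∀ z : A → ℝ, (∀ a, 0 ≤ z a) → ∑ a, z a = 1 →
      ∑ a, (y a - x a) ^ 2 ≤ ∑ a, (y a - z a) ^ 2) :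
    (∀ a : A, a ≠ aStar → x a < ε / Fintype.card A) ∧ 1 - ε < x aStar := by
  classical
  have hn : (0 : ℝ) < (Fintype.card A : ℝ) := by positivity
  have hεn : (0 : ℝ) < ε / Fintype.card A := by positivity
  have key : ∀ a : A, a ≠ aStar → x a < ε / Fintype.card A := by
    intro a ha
    rcases eq_or_lt_of_le (hx_nonneg a) with h0 | hpos
    · rw [← h0]; exact hεn
    · -- move all mass at a to aStar
      set z : A → ℝ := fun b => if b = a then 0 else if b = aStar then x aStar + x a else x b
        with hz
      have hz_nonneg : ∀ b, 0 ≤ z b := by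
        intro b
        simp only [hz]
        split_ifs
        · exact le_refl 0
        · exact add_nonneg (hx_nonneg _) (hx_nonneg _)
        · exact hx_nonneg b
      have hdiff : ∀ b, z b = x b + ((if b = a then -x a else 0) +
          (if b = aStar then x a else 0)) := by
        intro b
        by_cases h1 : b = a
        · subst h1; simp [hz, ha]
        · by_cases h2 : b = aStar <;> simp [hz, h1, h2, Ne.symm ha]
      have hz_sum : ∑ b, z b = 1 := by
        simp only [hdiff, Finset.sum_add_distrib, hx_sum, Finset.sum_ite_eq',
          Finset.mem_univ, if_true]
        ring
      have hle := hx_proj z hz_nonneg hz_sum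
      have hptwise : ∀ b, (y b - z b) ^ 2 = (y b - x b) ^ 2 +
          ((if b = a then x a * (2 * y a - x a) else 0) +
           (if b = aStar then x a * (x a - 2 * (y aStar - x aStar)) else 0)) := by
        intro b
        by_cases h1 : b = a
        · subst h1; simp [hz, ha]; ring
        · by_cases h2 : b = aStar
          · subst h2; simp [hz, h1]; ring
          · simp [hz, h1, h2]
      have hsum : ∑ b, (y b - z b) ^ 2 = ∑ b, (y b - x b) ^ 2 +
          (x a * (2 * y a - x a) + x a * (x a - 2 * (y aStar - x aStar))) := by
        simp only [hptwise, Finset.sum_add_distrib, Finset.sum_ite_eq',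
          Finset.mem_univ, if_true]
      rw [hsum] at hle
      have hfac : 0 ≤ x a * (2 * (y a - y aStar + x aStar)) := by nlinarith
      have hstar : y aStar - y a ≤ x aStar := by nlinarith
      have hxstar : 1 - ε / Fintype.card A < x aStar := lt_of_lt_of_le (hy a ha) hstar
      -- x a + x aStar ≤ 1
      have hsub : ({a, aStar} : Finset A) ⊆ Finset.univ := Finset.subset_univ _
      have hpair : x a + x aStar ≤ 1 := by
        rw [← hx_sum, ← Finset.sum_pair ha]
        exact Finset.sum_le_sum_of_subset_of_nonneg hsub (fun b _ _ => hx_nonneg b)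
      linarith
  refine ⟨key, ?_⟩
  have herase : ∑ b ∈ Finset.univ.erase aStar, x b = 1 - x aStar := by
    have := Finset.add_sum_erase Finset.univ x (Finset.mem_univ aStar)
    rw [hx_sum] at this
    linarith
  have hne : (Finset.univ.erase aStar).Nonempty := by
    rw [← Finset.card_pos, Finset.card_erase_of_mem (Finset.mem_univ aStar),
      Finset.card_univ]
    omega
  have hlt : ∑ b ∈ Finset.univ.erase aStar, x b <
      ∑ _b ∈ Finset.univ.erase aStar, ε / Fintype.card A :=
    Finset.sum_lt_sum_of_nonempty hne (fun b hb => key b (Finset.ne_of_mem_erase hb))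
  rw [herase, Finset.sum_const, Finset.card_erase_of_mem (Finset.mem_univ aStar),
    Finset.card_univ, nsmul_eq_mul] at hlt
  have hcard : ((Fintype.card A - 1 : ℕ) : ℝ) = (Fintype.card A : ℝ) - 1 := by
    have : 1 ≤ Fintype.card A := le_of_lt hA
    push_cast [this]; ring
  rw [hcard] at hlt
  have : ((Fintype.card A : ℝ) - 1) * (ε / Fintype.card A) < ε := by
    have h1 : ((Fintype.card A : ℝ) - 1) * (ε / Fintype.card A) <
        (Fintype.card A : ℝ) * (ε / Fintype.card A) := by
      apply mul_lt_mul_of_pos_right _ hεn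
      linarith
    have h2 : (Fintype.card A : ℝ) * (ε / Fintype.card A) = ε := by
      field_simp
    linarith
  linarith
end

section
/- Let S and I be nonempty finite sets and, for each i ∈ I, let A_i be a nonempty finite set. Let d : S → [0, ∞) satisfy Σ_{s∈S} d(s) = 1, and for each i ∈ I and s ∈ S let π_i(·|s) and π'_i(·|s) be elements of the simplex Δ(A_i). Then Σ_{s∈S} d(s) · Σ_{a ∈ ∏_{i∈I} A_i} | ∏_{i∈I} π_i(a_i|s) − ∏_{i∈I} π'_i(a_i|s) | ≤ Σ_{i∈I} √|A_i| · ‖π_i − π'_i‖, where ‖π_i − π'_i‖ = ( Σ_{s∈S} Σ_{a_i∈A_i} (π_i(a_i|s) − π'_i(a_i|s))² )^{1/2} is the Euclidean norm of the difference of the two policies of player i. -/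
open Finset

/-- Hybrid argument: total variation of a product distribution is bounded by the sum of
coordinate total variations. -/
lemma tv_prod_le {I : Type*} [Fintype I] [DecidableEq I] (A : I → Type*) [∀ i, Fintype (A i)]
    (p q : (i : I) → A i → ℝ) (hp0 : ∀ i a, 0 ≤ p i a) (hp1 : ∀ i, ∑ a, p i a = 1)
    (hq0 : ∀ i a, 0 ≤ q i a) (hq1 : ∀ i, ∑ a, q i a = 1) :
    ∑ a : (∀ i, A i), |(∏ i, p i (a i)) - ∏ i, q i (a i)| ≤ ∑ i, ∑ b, |p i b - q i b| := by
  classical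
  have key : ∀ t : Finset I,
      ∑ a : (∀ i, A i), |(∏ i, p i (a i)) -
        ∏ i, (if i ∈ t then q i (a i) else p i (a i))| ≤ ∑ i ∈ t, ∑ b, |p i b - q i b| := by
    intro t
    induction t using Finset.induction with
    | empty => simp
    | @insert j t hj ih =>
      have f : (i : I) → A i → ℝ := fun i b => if i ∈ t then q i b else p i b
      have hstep : ∀ a : (∀ i, A i),
          |(∏ i, p i (a i)) - ∏ i, (if i ∈ insert j t then q i (a i) else p i (a i))| ≤
            |(∏ i, p i (a i)) - ∏ i, (if i ∈ t then q i (a i) else p i (a i))| +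
            |(∏ i, (if i ∈ t then q i (a i) else p i (a i))) -
              ∏ i, (if i ∈ insert j t then q i (a i) else p i (a i))| :=
        fun a => abs_sub_le _ _ _
      have hsum := Finset.sum_le_sum fun a (_ : a ∈ Finset.univ) => hstep a
      rw [Finset.sum_add_distrib] at hsum
      refine le_trans hsum ?_
      rw [Finset.sum_insert hj]
      have h2 : ∑ a : (∀ i, A i),
          |(∏ i, (if i ∈ t then q i (a i) else p i (a i))) -
            ∏ i, (if i ∈ insert j t then q i (a i) else p i (a i))| =
          ∑ b, |p j b - q j b| := by
        have habs : ∀ a : (∀ i, A i),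
            |(∏ i, (if i ∈ t then q i (a i) else p i (a i))) -
              ∏ i, (if i ∈ insert j t then q i (a i) else p i (a i))| =
            ∏ i, (if i = j then |p i (a i) - q i (a i)| else
              (if i ∈ t then q i (a i) else p i (a i))) := by
          intro a
          rw [← Finset.mul_prod_erase Finset.univ
              (fun i => if i ∈ t then q i (a i) else p i (a i)) (Finset.mem_univ j),
            ← Finset.mul_prod_erase Finset.univ
              (fun i => if i ∈ insert j t then q i (a i) else p i (a i)) (Finset.mem_univ j),
            ← Finset.mul_prod_erase Finset.univ
              (fun i => if i = j then |p i (a i) - q i (a i)| else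
                (if i ∈ t then q i (a i) else p i (a i))) (Finset.mem_univ j)]
          have e1 : ∏ i ∈ Finset.univ.erase j, (if i ∈ insert j t then q i (a i) else p i (a i)) =
              ∏ i ∈ Finset.univ.erase j, (if i ∈ t then q i (a i) else p i (a i)) := by
            refine Finset.prod_congr rfl fun i hi => ?_
            simp [Finset.mem_insert, Finset.ne_of_mem_erase hi]
          have e2 : ∏ i ∈ Finset.univ.erase j, (if i = j then |p i (a i) - q i (a i)| else
              (if i ∈ t then q i (a i) else p i (a i))) =
              ∏ i ∈ Finset.univ.erase j, (if i ∈ t then q i (a i) else p i (a i)) := by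
            refine Finset.prod_congr rfl fun i hi => ?_
            simp [Finset.ne_of_mem_erase hi]
          rw [e1, e2, ← sub_mul, abs_mul]
          have e3 : |∏ i ∈ Finset.univ.erase j, (if i ∈ t then q i (a i) else p i (a i))| =
              ∏ i ∈ Finset.univ.erase j, (if i ∈ t then q i (a i) else p i (a i)) := by
            refine abs_of_nonneg (Finset.prod_nonneg fun i _ => ?_)
            by_cases h : i ∈ t <;> simp [h, hp0, hq0]
          rw [e3]
          congr 1
          simp [hj]
        simp only [habs]
        rw [← Fintype.prod_sum (fun i b => if i = j then |p i b - q i b| else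
          (if i ∈ t then q i b else p i b))]
        rw [← Finset.mul_prod_erase Finset.univ
          (fun i => ∑ b, (if i = j then |p i b - q i b| else
            (if i ∈ t then q i b else p i b))) (Finset.mem_univ j)]
        simp only [if_pos rfl]
        have : ∏ i ∈ Finset.univ.erase j, (∑ b, (if i = j then |p i b - q i b| else
            (if i ∈ t then q i b else p i b))) = 1 := by
          refine Finset.prod_eq_one fun i hi => ?_
          have hij := Finset.ne_of_mem_erase hi
          by_cases h : i ∈ t <;> simp [hij, h, hp1, hq1]
        rw [this, mul_one]
        simp
      rw [h2]
      linarith [ih]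
  have := key Finset.univ
  simpa using this

/-- Total variation of product policies, weighted by a state distribution, is bounded
by the sum of the Euclidean distances between the individual policies. -/
theorem product_policy_tv_bound
    {S : Type*} [Fintype S] [Nonempty S]
    {I : Type*} [Fintype I] [Nonempty I] [DecidableEq I]
    (A : I → Type*) [∀ i, Fintype (A i)] [∀ i, Nonempty (A i)]
    (d : S → ℝ) (hd0 : ∀ s, 0 ≤ d s) (hd1 : ∑ s, d s = 1)
    (π π' : (i : I) → S → A i → ℝ)
    (hπ_nonneg : ∀ i s a, 0 ≤ π i s a) (hπ_sum : ∀ i s, ∑ a, π i s a = 1)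
    (hπ'_nonneg : ∀ i s a, 0 ≤ π' i s a) (hπ'_sum : ∀ i s, ∑ a, π' i s a = 1) :
    ∑ s, d s * ∑ a : (∀ i, A i), |(∏ i, π i s (a i)) - ∏ i, π' i s (a i)| ≤
      ∑ i, Real.sqrt (Fintype.card (A i)) *
        Real.sqrt (∑ s, ∑ b : A i, (π i s b - π' i s b) ^ 2) := by
  classical
  have step1 : ∑ s, d s * ∑ a : (∀ i, A i), |(∏ i, π i s (a i)) - ∏ i, π' i s (a i)| ≤
      ∑ s, d s * ∑ i, ∑ b, |π i s b - π' i s b| := by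
    refine Finset.sum_le_sum fun s _ => mul_le_mul_of_nonneg_left ?_ (hd0 s)
    exact tv_prod_le A (fun i => π i s) (fun i => π' i s)
      (fun i a => hπ_nonneg i s a) (fun i => hπ_sum i s)
      (fun i a => hπ'_nonneg i s a) (fun i => hπ'_sum i s)
  refine step1.trans ?_
  have swap : ∑ s, d s * ∑ i, ∑ b, |π i s b - π' i s b| =
      ∑ i, ∑ s, d s * ∑ b, |π i s b - π' i s b| := by
    simp_rw [Finset.mul_sum]
    exact Finset.sum_comm
  rw [swap]
  refine Finset.sum_le_sum fun i _ => ?_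
  -- per-coordinate bound
  have hds1 : ∀ s, d s ≤ 1 := by
    intro s
    calc d s ≤ ∑ s', d s' := Finset.single_le_sum (fun s' _ => hd0 s') (Finset.mem_univ s)
      _ = 1 := hd1
  have hd2 : ∑ s, (d s) ^ 2 ≤ 1 := by
    calc ∑ s, (d s) ^ 2 ≤ ∑ s, d s := by
          refine Finset.sum_le_sum fun s _ => ?_
          nlinarith [hd0 s, hds1 s]
      _ = 1 := hd1
  set q : S → ℝ := fun s => ∑ b, (π i s b - π' i s b) ^ 2 with hq
  have hq0 : ∀ s, 0 ≤ q s := fun s => Finset.sum_nonneg fun b _ => sq_nonneg _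
  have hcs1 : ∀ s, ∑ b, |π i s b - π' i s b| ≤
      Real.sqrt (Fintype.card (A i)) * Real.sqrt (q s) := by
    intro s
    have := Real.sum_mul_le_sqrt_mul_sqrt Finset.univ (fun _ : A i => (1 : ℝ))
      (fun b => |π i s b - π' i s b|)
    simpa [Finset.card_univ, sq_abs] using this
  have hcs2 : ∑ s, d s * Real.sqrt (q s) ≤ Real.sqrt (∑ s, q s) := by
    have h := Real.sum_mul_le_sqrt_mul_sqrt Finset.univ d (fun s => Real.sqrt (q s))
    have heq : ∀ s, Real.sqrt (q s) ^ 2 = q s := fun s => Real.sq_sqrt (hq0 s)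
    simp only [heq] at h
    refine h.trans ?_
    have h1 : Real.sqrt (∑ s, (d s) ^ 2) ≤ 1 := by
      rw [show (1 : ℝ) = Real.sqrt 1 by simp]
      exact Real.sqrt_le_sqrt hd2
    calc Real.sqrt (∑ s, (d s) ^ 2) * Real.sqrt (∑ s, q s)
        ≤ 1 * Real.sqrt (∑ s, q s) :=
          mul_le_mul_of_nonneg_right h1 (Real.sqrt_nonneg _)
      _ = Real.sqrt (∑ s, q s) := one_mul _
  calc ∑ s, d s * ∑ b, |π i s b - π' i s b|
      ≤ ∑ s, d s * (Real.sqrt (Fintype.card (A i)) * Real.sqrt (q s)) :=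
        Finset.sum_le_sum fun s _ => mul_le_mul_of_nonneg_left (hcs1 s) (hd0 s)
    _ = Real.sqrt (Fintype.card (A i)) * ∑ s, d s * Real.sqrt (q s) := by
        rw [Finset.mul_sum]; congr 1; funext s; ring
    _ ≤ Real.sqrt (Fintype.card (A i)) * Real.sqrt (∑ s, q s) :=
        mul_le_mul_of_nonneg_left hcs2 (Real.sqrt_nonneg _)
end
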